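/- Let A ∈ ℂ^{m×n} satisfy A A* = I, let b ∈ ℂ^m, μ > 0, β > 0 and γ ∈ (0, (1+√5)/2). Consider the dual alternating direction iteration: given (x^k, y^k), set z^{k+1} = P_{B₁^∞}(A*y^k + x^k/β), then y^{k+1} = (β/(μ+β))·(A z^{k+1} − (A x^k − b)/β), then x^{k+1} = x^k − γβ(z^{k+1} − A*y^{k+1}), where P_{B₁^∞} is the componentwise projection onto B₁^∞ = {ξ ∈ ℂ^n : ‖ξ‖_∞ ≤ 1}. Then for any starting point (x^0, y^0), the sequence (x^k, y^k, z^k) converges to a limit (x̃, ỹ, z̃), where x̃ is a solution of min over x ∈ ℂ^n of ‖x‖₁ + (1/(2μ))‖A x − b‖₂², and (ỹ, z̃) is a solution of max over y ∈ ℂ^m, z ∈ ℂ^n of Re(b*y) − (μ/2)‖y‖₂² subject to z − A*y = 0 and ‖z‖_∞ ≤ 1. -/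

import Mathlib

open Filter Topology Matrix Finset

noncomputable def l1 {ι : Type*} [Fintype ι] (v : ι → ℂ) : ℝ := ∑ i, ‖v i‖

noncomputable def l2sq {ι : Type*} [Fintype ι] (v : ι → ℂ) : ℝ := ∑ i, ‖v i‖^2

noncomputable def l2 {ι : Type*} [Fintype ι] (v : ι → ℂ) : ℝ := Real.sqrt (l2sq v)

noncomputable def linf {ι : Type*} [Fintype ι] (v : ι → ℂ) : ℝ := ⨆ i, ‖v i‖

noncomputable def csign (w : ℂ) : ℂ := if w = 0 then 0 else w / ((‖w‖ : ℝ) : ℂ)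

noncomputable def shrink {ι : Type*} [Fintype ι] (z : ι → ℂ) (ν : ℝ) : ι → ℂ :=
  fun i => ((max (‖z i‖ - ν) 0 : ℝ) : ℂ) * csign (z i)

noncomputable def reInner {ι : Type*} [Fintype ι] (y v : ι → ℂ) : ℝ :=
  (∑ i, (starRingEnd ℂ) (y i) * v i).re

noncomputable def projBall {ι : Type*} [Fintype ι] (t : ℝ) (v : ι → ℂ) : ι → ℂ :=
  if l2 v ≤ t then v else (t / l2 v) • v

noncomputable def projBox {ι : Type*} [Fintype ι] (v : ι → ℂ) : ι → ℂ :=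
  fun i => if ‖v i‖ ≤ 1 then v i else v i / ((‖v i‖ : ℝ) : ℂ)

noncomputable def lmax {m n : ℕ} (A : Matrix (Fin m) (Fin n) ℂ) : ℝ :=
  ⨆ i, (Matrix.isHermitian_conjTranspose_mul_self A).eigenvalues i

/-!
The primal objective is continuous and coercive, so it has a minimiser, and the optimality
conditions at a minimiser produce a KKT point `(x̂, ŷ, ẑ)`: `ẑ = A*ŷ`, `μŷ = b - Ax̂`,
`‖ẑ‖_∞ ≤ 1`, and `x̂` lies in the normal cone of the unit box at `ẑ`. Every KKT point is primal
and dual optimal.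

Write `r = A*y - z` for the residual. Using `AA* = I`, the projection inequality of the `z`-step
tested at `ẑ` and the normal-cone condition at `x̂`, one step of the iteration decreases the energy
`‖x - x̂‖² + γβ²‖y - ŷ‖² + γβ²(γ-1)²‖r‖²` by at least `2γβμ‖y - ŷ‖² + γβ²(1 + γ - γ²)‖r‖²`,
and `1 + γ - γ² > 0` for `0 < γ < (1 + √5)/2`. Hence `y → ŷ`, `r → 0`, `z → ẑ`, and `x` is
bounded. A cluster point of `x` is again a KKT point with the same `(ŷ, ẑ)`; the energy measured
from it is antitone and tends to `0` along a subsequence, so `x` converges to that cluster point.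
-/

section ReInner

variable {ι : Type*} [Fintype ι]

lemma re_conj_mul_le (a b : ℂ) : ((starRingEnd ℂ) a * b).re ≤ ‖a‖ * ‖b‖ :=
  (Complex.re_le_norm _).trans (by rw [norm_mul, Complex.norm_conj])

lemma reInner_eq_sum (u v : ι → ℂ) : reInner u v = ∑ i, ((starRingEnd ℂ) (u i) * v i).re := by
  simp [reInner, Complex.re_sum]

lemma reInner_comm (u v : ι → ℂ) : reInner u v = reInner v u := by
  simp only [reInner_eq_sum]
  refine Finset.sum_congr rfl fun i _ => ?_
  rw [← Complex.conj_re, map_mul, Complex.conj_conj, mul_comm]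

lemma reInner_add_left (u v w : ι → ℂ) : reInner (u + v) w = reInner u w + reInner v w := by
  simp [reInner_eq_sum, ← Finset.sum_add_distrib, add_mul]

lemma reInner_add_right (u v w : ι → ℂ) : reInner u (v + w) = reInner u v + reInner u w := by
  simp [reInner_eq_sum, ← Finset.sum_add_distrib, mul_add]

lemma reInner_sub_left (u v w : ι → ℂ) : reInner (u - v) w = reInner u w - reInner v w := by
  simp [reInner_eq_sum, ← Finset.sum_sub_distrib, sub_mul]

lemma reInner_sub_right (u v w : ι → ℂ) : reInner u (v - w) = reInner u v - reInner u w := by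
  simp [reInner_eq_sum, ← Finset.sum_sub_distrib, mul_sub]

lemma reInner_neg_left (u v : ι → ℂ) : reInner (-u) v = -reInner u v := by
  simp only [reInner_eq_sum, ← Finset.sum_neg_distrib, Pi.neg_apply, map_neg, neg_mul,
    Complex.neg_re]

lemma reInner_neg_right (u v : ι → ℂ) : reInner u (-v) = -reInner u v := by
  simp only [reInner_eq_sum, ← Finset.sum_neg_distrib, Pi.neg_apply, mul_neg, Complex.neg_re]

lemma reInner_smul_left (r : ℝ) (u v : ι → ℂ) : reInner (r • u) v = r * reInner u v := by
  simp [reInner_eq_sum, Finset.mul_sum, Complex.real_smul, mul_assoc]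

lemma reInner_smul_right (r : ℝ) (u v : ι → ℂ) : reInner u (r • v) = r * reInner u v := by
  simp [reInner_eq_sum, Finset.mul_sum, Complex.real_smul, mul_left_comm]

lemma reInner_single_right [DecidableEq ι] (u : ι → ℂ) (i : ι) (c : ℂ) :
    reInner u (Pi.single i c) = ((starRingEnd ℂ) (u i) * c).re := by
  rw [reInner_eq_sum, Finset.sum_eq_single i (fun j _ hj => by simp [hj]) (by simp)]
  simp

lemma l2sq_eq_reInner (v : ι → ℂ) : l2sq v = reInner v v := by
  simp [l2sq, reInner_eq_sum, Complex.conj_mul', ← Complex.ofReal_pow]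

lemma l2sq_nonneg (v : ι → ℂ) : 0 ≤ l2sq v :=
  Finset.sum_nonneg fun _ _ => sq_nonneg _

lemma l2sq_add (u v : ι → ℂ) : l2sq (u + v) = l2sq u + 2 * reInner u v + l2sq v := by
  simp only [l2sq_eq_reInner, reInner_add_left, reInner_add_right, reInner_comm v u]
  ring

lemma l2sq_sub (u v : ι → ℂ) : l2sq (u - v) = l2sq u - 2 * reInner u v + l2sq v := by
  simp only [l2sq_eq_reInner, reInner_sub_left, reInner_sub_right, reInner_comm v u]
  ring

lemma l2sq_smul (r : ℝ) (v : ι → ℂ) : l2sq (r • v) = r ^ 2 * l2sq v := by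
  simp only [l2sq_eq_reInner, reInner_smul_left, reInner_smul_right]
  ring

lemma sq_norm_le_l2sq (v : ι → ℂ) (i : ι) : ‖v i‖ ^ 2 ≤ l2sq v :=
  Finset.single_le_sum (f := fun j => ‖v j‖ ^ 2) (fun _ _ => sq_nonneg _) (mem_univ i)

lemma norm_le_sqrt_l2sq (v : ι → ℂ) : ‖v‖ ≤ √(l2sq v) :=
  (pi_norm_le_iff_of_nonneg (Real.sqrt_nonneg _)).2 fun i =>
    Real.le_sqrt_of_sq_le (sq_norm_le_l2sq v i)

lemma tendsto_of_tendsto_l2sq_sub {u : ℕ → ι → ℂ} {U : ι → ℂ}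
    (h : Tendsto (fun k => l2sq (u k - U)) atTop (𝓝 0)) : Tendsto u atTop (𝓝 U) := by
  have hsqrt := (Real.continuous_sqrt.tendsto 0).comp h
  rw [Real.sqrt_zero] at hsqrt
  exact tendsto_iff_norm_sub_tendsto_zero.2 <|
    squeeze_zero (fun _ => norm_nonneg _) (fun k => norm_le_sqrt_l2sq _) hsqrt

lemma norm_le_l1 (v : ι → ℂ) (i : ι) : ‖v i‖ ≤ l1 v :=
  Finset.single_le_sum (f := fun j => ‖v j‖) (fun _ _ => norm_nonneg _) (mem_univ i)

lemma pi_norm_le_l1 (v : ι → ℂ) : ‖v‖ ≤ l1 v :=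
  (pi_norm_le_iff_of_nonneg (Finset.sum_nonneg fun _ _ => norm_nonneg _)).2 (norm_le_l1 v)

lemma l1_add_le (u v : ι → ℂ) : l1 (u + v) ≤ l1 u + l1 v := by
  rw [l1, l1, l1, ← Finset.sum_add_distrib]
  exact Finset.sum_le_sum fun i _ => norm_add_le _ _

lemma l1_smul (r : ℝ) (v : ι → ℂ) : l1 (r • v) = |r| * l1 v := by
  simp [l1, Finset.mul_sum]

lemma l1_single [DecidableEq ι] (i : ι) (c : ℂ) : l1 (Pi.single i c) = ‖c‖ := by
  simp [l1, Pi.single_apply, apply_ite]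

lemma reInner_le_l1 {u : ι → ℂ} (hu : ∀ i, ‖u i‖ ≤ 1) (v : ι → ℂ) : reInner u v ≤ l1 v := by
  rw [reInner_eq_sum, l1]
  exact Finset.sum_le_sum fun i _ =>
    (re_conj_mul_le _ _).trans (mul_le_of_le_one_left (norm_nonneg _) (hu i))

lemma norm_csign_le_one (w : ℂ) : ‖csign w‖ ≤ 1 := by
  unfold csign
  split_ifs with hw
  · simp
  · simp [hw]

lemma reInner_csign (v : ι → ℂ) : reInner v (fun i => csign (v i)) = l1 v := by
  rw [reInner_eq_sum, l1]
  refine Finset.sum_congr rfl fun i _ => ?_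
  unfold csign
  split_ifs with hv
  · simp [hv]
  · rw [mul_div_assoc', Complex.conj_mul', ← Complex.ofReal_pow, ← Complex.ofReal_div,
      Complex.ofReal_re, pow_two, mul_div_cancel_right₀ _ (norm_ne_zero_iff.2 hv)]

lemma linf_le_one_iff (v : ι → ℂ) : linf v ≤ 1 ↔ ∀ i, ‖v i‖ ≤ 1 :=
  ⟨fun h i => (le_ciSup (Set.finite_range _).bddAbove i).trans h,
    fun h => Real.iSup_le h zero_le_one⟩

@[fun_prop]
lemma continuous_l1 : Continuous (l1 : (ι → ℂ) → ℝ) := by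
  unfold l1; fun_prop

@[fun_prop]
lemma continuous_l2sq : Continuous (l2sq : (ι → ℂ) → ℝ) := by
  unfold l2sq; fun_prop

@[fun_prop]
lemma Continuous.reInner {α : Type*} [TopologicalSpace α] {f g : α → ι → ℂ} (hf : Continuous f)
    (hg : Continuous g) : Continuous fun a => _root_.reInner (f a) (g a) := by
  unfold _root_.reInner; fun_prop

end ReInner

section Matrix

variable {m n : Type*} [Fintype m] [Fintype n]

lemma reInner_mulVec_left (A : Matrix m n ℂ) (u : n → ℂ) (w : m → ℂ) :
    reInner (A *ᵥ u) w = reInner u (Aᴴ *ᵥ w) := by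
  change (star (A *ᵥ u) ⬝ᵥ w).re = (star u ⬝ᵥ (Aᴴ *ᵥ w)).re
  rw [Matrix.star_mulVec, dotProduct_mulVec]

variable [DecidableEq m] {A : Matrix m n ℂ}

lemma mulVec_conjTranspose_mulVec (hA : A * Aᴴ = 1) (u : m → ℂ) : A *ᵥ (Aᴴ *ᵥ u) = u := by
  rw [mulVec_mulVec, hA, one_mulVec]

lemma reInner_conjTranspose_mulVec (hA : A * Aᴴ = 1) (u v : m → ℂ) :
    reInner (Aᴴ *ᵥ u) (Aᴴ *ᵥ v) = reInner u v := by
  rw [reInner_mulVec_left, conjTranspose_conjTranspose, mulVec_conjTranspose_mulVec hA]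

lemma l2sq_conjTranspose_mulVec (hA : A * Aᴴ = 1) (u : m → ℂ) : l2sq (Aᴴ *ᵥ u) = l2sq u := by
  rw [l2sq_eq_reInner, reInner_conjTranspose_mulVec hA, l2sq_eq_reInner]

end Matrix

section ProjBox

variable {ι : Type*} [Fintype ι]

lemma norm_projBox_le (v : ι → ℂ) (i : ι) : ‖projBox v i‖ ≤ 1 := by
  unfold projBox
  split_ifs with hv
  · exact hv
  · have : v i ≠ 0 := by rintro h; simp [h] at hv
    simp [this]

lemma reInner_sub_projBox_le (w v : ι → ℂ) (hv : ∀ i, ‖v i‖ ≤ 1) :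
    reInner (w - projBox w) (v - projBox w) ≤ 0 := by
  rw [reInner_eq_sum]
  refine Finset.sum_nonpos fun i _ => ?_
  simp only [Pi.sub_apply, projBox]
  split_ifs with hw
  · simp
  · set p := w i / ((‖w i‖ : ℝ) : ℂ)
    have hw0 : ‖w i‖ ≠ 0 := by rintro h; simp [h] at hw
    have hp : ‖p‖ = 1 := by simp [p, hw0]
    have hwp : w i - p = ((‖w i‖ - 1 : ℝ) : ℂ) * p := by
      have hw' : w i = ((‖w i‖ : ℝ) : ℂ) * p := (mul_div_cancel₀ _ (by exact_mod_cast hw0)).symm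
      nth_rewrite 1 [hw']
      push_cast; ring
    rw [hwp, map_mul, Complex.conj_ofReal, mul_assoc, Complex.re_ofReal_mul]
    refine mul_nonpos_of_nonneg_of_nonpos (by linarith) ?_
    have hpv := re_conj_mul_le p (v i)
    rw [hp, one_mul] at hpv
    rw [mul_sub, Complex.sub_re, Complex.conj_mul', hp, Complex.ofReal_one, one_pow, Complex.one_re]
    linarith [hv i]

end ProjBox

section Optimality

variable {m n : Type*} [Fintype m] [Fintype n] (A : Matrix m n ℂ) (b : m → ℂ) (μ : ℝ)

noncomputable def primalObjective (x : n → ℂ) : ℝ := l1 x + (1 / (2 * μ)) * l2sq (A *ᵥ x - b)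

noncomputable def dualObjective (y : m → ℂ) : ℝ := reInner b y - (μ / 2) * l2sq y

/-- The last field says that `x` lies in the normal cone of the unit box at `z`; together with
`norm_z_le` it makes `z` a subgradient of `l1` at `x`. -/
structure IsKKTPoint (x : n → ℂ) (y : m → ℂ) (z : n → ℂ) : Prop where
  z_eq : z = Aᴴ *ᵥ y
  smul_y_eq : μ • y = b - A *ᵥ x
  norm_z_le : ∀ i, ‖z i‖ ≤ 1
  reInner_sub_le : ∀ v : n → ℂ, (∀ i, ‖v i‖ ≤ 1) → reInner x (v - z) ≤ 0

variable {A b μ}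

lemma primalObjective_add (hμ : μ ≠ 0) {x : n → ℂ} {y : m → ℂ} (hy : μ • y = b - A *ᵥ x)
    (d : n → ℂ) :
    primalObjective A b μ (x + d) = primalObjective A b μ x + (l1 (x + d) - l1 x)
      - reInner (Aᴴ *ᵥ y) d + l2sq (A *ᵥ d) / (2 * μ) := by
  have hcross : reInner (A *ᵥ x - b) (A *ᵥ d) = -μ * reInner (Aᴴ *ᵥ y) d := by
    rw [show A *ᵥ x - b = (-μ) • y by rw [neg_smul, hy, neg_sub], reInner_smul_left,
      reInner_comm, reInner_mulVec_left, reInner_comm]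
  unfold primalObjective
  rw [mulVec_add, show A *ᵥ x + A *ᵥ d - b = (A *ᵥ x - b) + A *ᵥ d by abel, l2sq_add, hcross]
  field_simp
  ring

namespace IsKKTPoint

variable {x : n → ℂ} {y : m → ℂ} {z : n → ℂ}

lemma l1_le_reInner (hp : IsKKTPoint A b μ x y z) : l1 x ≤ reInner x z := by
  have h := hp.reInner_sub_le _ fun i => norm_csign_le_one (x i)
  rw [reInner_sub_right, reInner_csign] at h
  linarith

lemma l1_add_reInner_le (hp : IsKKTPoint A b μ x y z) (w : n → ℂ) :
    l1 x + reInner z (w - x) ≤ l1 w := by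
  rw [reInner_sub_right, reInner_comm z x]
  linarith [hp.l1_le_reInner, reInner_le_l1 hp.norm_z_le w]

lemma primalObjective_le (hp : IsKKTPoint A b μ x y z) (hμ : 0 < μ) (w : n → ℂ) :
    primalObjective A b μ x ≤ primalObjective A b μ w := by
  have h := primalObjective_add hμ.ne' hp.smul_y_eq (w - x)
  rw [add_sub_cancel, ← hp.z_eq] at h
  have hq : 0 ≤ l2sq (A *ᵥ (w - x)) / (2 * μ) := div_nonneg (l2sq_nonneg _) (by positivity)
  linarith [hp.l1_add_reInner_le w]

lemma dualObjective_le (hp : IsKKTPoint A b μ x y z) (hμ : 0 ≤ μ) {y' : m → ℂ} {z' : n → ℂ}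
    (hz' : z' = Aᴴ *ᵥ y') (hbox : ∀ i, ‖z' i‖ ≤ 1) :
    dualObjective b μ y' ≤ dualObjective b μ y := by
  have hb : b = μ • y + A *ᵥ x := by rw [hp.smul_y_eq]; abel
  have hcross : reInner b (y' - y) = μ * reInner y (y' - y) + reInner x (z' - z) := by
    rw [hb, reInner_add_left, reInner_smul_left, reInner_mulVec_left, mulVec_sub, ← hz',
      ← hp.z_eq]
  have hsq : l2sq y' = l2sq y + 2 * reInner y (y' - y) + l2sq (y' - y) := by
    rw [← l2sq_add, add_sub_cancel]
  have hby : reInner b y' = reInner b y + reInner b (y' - y) := by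
    rw [reInner_sub_right]; ring
  unfold dualObjective
  rw [hby, hcross, hsq]
  nlinarith [hp.reInner_sub_le z' hbox, mul_nonneg hμ (l2sq_nonneg (y' - y))]

end IsKKTPoint

lemma exists_forall_primalObjective_le (hμ : 0 < μ) :
    ∃ x, ∀ w, primalObjective A b μ x ≤ primalObjective A b μ w := by
  refine Continuous.exists_forall_le (by unfold primalObjective; fun_prop) ?_
  refine tendsto_atTop_mono (fun x => (pi_norm_le_l1 x).trans ?_) tendsto_norm_cocompact_atTop
  exact le_add_of_nonneg_right (mul_nonneg (by positivity) (l2sq_nonneg _))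

lemma l1_add_reInner_le_of_forall_le (hμ : 0 < μ) {x : n → ℂ} {y : m → ℂ}
    (hy : μ • y = b - A *ᵥ x) (hmin : ∀ w, primalObjective A b μ x ≤ primalObjective A b μ w)
    (w : n → ℂ) : l1 x + reInner (Aᴴ *ᵥ y) (w - x) ≤ l1 w := by
  set a := l1 w - l1 x - reInner (Aᴴ *ᵥ y) (w - x)
  set C := l2sq (A *ᵥ (w - x)) / (2 * μ)
  -- compare `x` with `x + ε • (w - x)`, using convexity of `l1`, and let `ε → 0`
  have hsmall : ∀ ε : ℝ, 0 < ε → ε < 1 → 0 ≤ a + ε * C := by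
    intro ε hε0 hε1
    have hconv : l1 (x + ε • (w - x)) ≤ (1 - ε) * l1 x + ε * l1 w := by
      calc l1 (x + ε • (w - x)) = l1 ((1 - ε) • x + ε • w) := by congr 1; module
        _ ≤ l1 ((1 - ε) • x) + l1 (ε • w) := l1_add_le _ _
        _ = (1 - ε) * l1 x + ε * l1 w := by
          rw [l1_smul, l1_smul, abs_of_pos (by linarith), abs_of_pos hε0]
    have h := hmin (x + ε • (w - x))
    rw [primalObjective_add hμ.ne' hy, mulVec_smul, l2sq_smul, reInner_smul_right] at h
    have hexp : ε * (a + ε * C) = ε * (l1 w - l1 x) - ε * reInner (Aᴴ *ᵥ y) (w - x)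
        + ε ^ 2 * l2sq (A *ᵥ (w - x)) / (2 * μ) := by
      simp only [a, C]; ring
    exact nonneg_of_mul_nonneg_right (by linarith) hε0
  have hlim : Tendsto (fun ε : ℝ => a + ε * C) (𝓝[>] 0) (𝓝 (a + 0 * C)) :=
    ((continuous_const.add (continuous_id.mul continuous_const)).tendsto 0).mono_left
      nhdsWithin_le_nhds
  have ha : 0 ≤ a + 0 * C := ge_of_tendsto hlim <| by
    filter_upwards [Ioo_mem_nhdsGT one_pos] with ε hε using hsmall ε hε.1 hε.2
  simp only [a, zero_mul, add_zero] at ha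
  linarith

lemma isKKTPoint_of_l1_add_reInner_le [DecidableEq n] {x : n → ℂ} {y : m → ℂ}
    (hy : μ • y = b - A *ᵥ x) (hsub : ∀ w, l1 x + reInner (Aᴴ *ᵥ y) (w - x) ≤ l1 w) :
    IsKKTPoint A b μ x y (Aᴴ *ᵥ y) where
  z_eq := rfl
  smul_y_eq := hy
  norm_z_le i := by
    have h := hsub (x + Pi.single i ((Aᴴ *ᵥ y) i))
    rw [add_sub_cancel_left, reInner_single_right, Complex.conj_mul', ← Complex.ofReal_pow,
      Complex.ofReal_re] at h
    have h' := l1_add_le x (Pi.single i ((Aᴴ *ᵥ y) i))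
    rw [l1_single] at h'
    nlinarith [norm_nonneg ((Aᴴ *ᵥ y) i)]
  reInner_sub_le v hv := by
    have h := hsub 0
    rw [zero_sub, reInner_neg_right, show l1 (0 : n → ℂ) = 0 by simp [l1]] at h
    rw [reInner_sub_right, reInner_comm x v, reInner_comm x (Aᴴ *ᵥ y)]
    linarith [reInner_le_l1 hv x]

lemma exists_isKKTPoint (hμ : 0 < μ) : ∃ x y z, IsKKTPoint A b μ x y z := by
  classical
  obtain ⟨x, hmin⟩ := exists_forall_primalObjective_le (A := A) (b := b) hμ
  have hy : μ • ((1 / μ) • (b - A *ᵥ x)) = b - A *ᵥ x := by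
    rw [smul_smul, mul_one_div_cancel hμ.ne', one_smul]
  exact ⟨x, _, _, isKKTPoint_of_l1_add_reInner_le hy (l1_add_reInner_le_of_forall_le hμ hy hmin)⟩

end Optimality

lemma tendsto_zero_of_succ_add_mul_le {W a : ℕ → ℝ} {c : ℝ} (hc : 0 < c) (hW : ∀ k, 0 ≤ W k)
    (ha : ∀ k, 0 ≤ a k) (h : ∀ k, W (k + 1) + c * a k ≤ W k) : Tendsto a atTop (𝓝 0) := by
  refine (summable_of_sum_range_le ha (c := W 0 / c) fun N => ?_).tendsto_atTop_zero
  rw [le_div_iff₀ hc, Finset.sum_mul]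
  calc ∑ k ∈ range N, a k * c ≤ ∑ k ∈ range N, (W k - W (k + 1)) :=
        Finset.sum_le_sum fun k _ => by linarith [h k]
    _ = W 0 - W N := Finset.sum_range_sub' W N
    _ ≤ W 0 := by linarith [hW N]

lemma sq_lt_add_one_of_lt_goldenRatio {γ : ℝ} (hγ : 0 < γ) (hγφ : γ < Real.goldenRatio) :
    γ ^ 2 < γ + 1 := by
  nlinarith [Real.goldenRatio_mul_goldenConj, Real.goldenRatio_add_goldenConj,
    Real.goldenConj_neg]

section DualADM

variable {m n : Type*} [Fintype m] [Fintype n]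

structure IsDualADM (A : Matrix m n ℂ) (b : m → ℂ) (μ β γ : ℝ) (x : ℕ → n → ℂ)
    (y : ℕ → m → ℂ) (z : ℕ → n → ℂ) : Prop where
  z_succ : ∀ k, z (k + 1) = projBox (Aᴴ *ᵥ y k + (1 / β) • x k)
  y_succ : ∀ k, y (k + 1) = (β / (μ + β)) • (A *ᵥ z (k + 1) - (1 / β) • (A *ᵥ x k - b))
  x_succ : ∀ k, x (k + 1) = x k - (γ * β) • (z (k + 1) - Aᴴ *ᵥ y (k + 1))

noncomputable def dualADMLyapunov (A : Matrix m n ℂ) (β γ : ℝ) (x : ℕ → n → ℂ) (y : ℕ → m → ℂ)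
    (z : ℕ → n → ℂ) (xa : n → ℂ) (ya : m → ℂ) (k : ℕ) : ℝ :=
  l2sq (x k - xa) + γ * β ^ 2 * l2sq (y k - ya) + γ * β ^ 2 * (γ - 1) ^ 2 * l2sq (Aᴴ *ᵥ y k - z k)

variable {A : Matrix m n ℂ} {b : m → ℂ} {μ β γ : ℝ} {x : ℕ → n → ℂ} {y : ℕ → m → ℂ}
  {z : ℕ → n → ℂ} {xa : n → ℂ} {ya : m → ℂ} {za : n → ℂ}

lemma l2sq_sub_le_dualADMLyapunov (hγ : 0 ≤ γ) (k : ℕ) :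
    l2sq (x k - xa) ≤ dualADMLyapunov A β γ x y z xa ya k := by
  unfold dualADMLyapunov
  have := mul_nonneg (by positivity : 0 ≤ γ * β ^ 2) (l2sq_nonneg (y k - ya))
  have := mul_nonneg (by positivity : 0 ≤ γ * β ^ 2 * (γ - 1) ^ 2) (l2sq_nonneg (Aᴴ *ᵥ y k - z k))
  linarith

lemma dualADMLyapunov_nonneg (hγ : 0 ≤ γ) (k : ℕ) : 0 ≤ dualADMLyapunov A β γ x y z xa ya k :=
  (l2sq_nonneg _).trans (l2sq_sub_le_dualADMLyapunov hγ k)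

lemma tendsto_dualADMLyapunov (hx : Tendsto x atTop (𝓝 xa)) (hy : Tendsto y atTop (𝓝 ya))
    (hz : Tendsto z atTop (𝓝 (Aᴴ *ᵥ ya))) :
    Tendsto (dualADMLyapunov A β γ x y z xa ya) atTop (𝓝 0) := by
  have hcont : Continuous fun p : (n → ℂ) × (m → ℂ) × (n → ℂ) =>
      l2sq (p.1 - xa) + γ * β ^ 2 * l2sq (p.2.1 - ya)
        + γ * β ^ 2 * (γ - 1) ^ 2 * l2sq (Aᴴ *ᵥ p.2.1 - p.2.2) := by fun_prop
  convert (hcont.tendsto (xa, ya, Aᴴ *ᵥ ya)).comp (hx.prodMk_nhds (hy.prodMk_nhds hz)) using 2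
  · rfl
  · simp [l2sq]

namespace IsDualADM

lemma norm_z_succ_le (h : IsDualADM A b μ β γ x y z) (k : ℕ) (i : n) : ‖z (k + 1) i‖ ≤ 1 := by
  rw [h.z_succ k]
  exact norm_projBox_le _ i

lemma reInner_sub_z_succ_le (h : IsDualADM A b μ β γ x y z) (hβ : 0 < β) (k : ℕ) {v : n → ℂ}
    (hv : ∀ i, ‖v i‖ ≤ 1) :
    reInner (x k + β • (Aᴴ *ᵥ y k - z (k + 1))) (v - z (k + 1)) ≤ 0 := by
  have hscale : x k + β • (Aᴴ *ᵥ y k - z (k + 1))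
      = β • (Aᴴ *ᵥ y k + (1 / β) • x k - z (k + 1)) := by
    simp only [smul_sub, smul_add, smul_smul, mul_one_div_cancel hβ.ne', one_smul]
    abel
  rw [hscale, reInner_smul_left, h.z_succ k]
  exact mul_nonpos_of_nonneg_of_nonpos hβ.le (reInner_sub_projBox_le _ _ hv)

lemma add_smul_y_succ (h : IsDualADM A b μ β γ x y z) (hμβ : μ + β ≠ 0) (hβ : β ≠ 0) (k : ℕ) :
    (μ + β) • y (k + 1) = b - A *ᵥ x k + β • (A *ᵥ z (k + 1)) := by
  rw [h.y_succ k, smul_smul, mul_div_cancel₀ _ hμβ, smul_sub, smul_smul, mul_one_div_cancel hβ]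
  module

variable [DecidableEq m]

lemma smul_y_succ_sub (h : IsDualADM A b μ β γ x y z) (hA : A * Aᴴ = 1)
    (hp : IsKKTPoint A b μ xa ya za) (hμβ : μ + β ≠ 0) (hβ : β ≠ 0) (k : ℕ) :
    μ • (y (k + 1) - ya) = -(A *ᵥ (x k - xa + β • (Aᴴ *ᵥ y (k + 1) - z (k + 1)))) := by
  have hk := h.add_smul_y_succ hμβ hβ k
  have ha := hp.smul_y_eq
  simp only [mulVec_add, mulVec_sub, mulVec_smul, mulVec_conjTranspose_mulVec hA]
  linear_combination (norm := module) hk - ha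

lemma smul_y_succ_succ_sub (h : IsDualADM A b μ β γ x y z) (hA : A * Aᴴ = 1) (hμβ : μ + β ≠ 0)
    (hβ : β ≠ 0) (k : ℕ) :
    μ • (y (k + 2) - y (k + 1)) = -(β • (A *ᵥ (Aᴴ *ᵥ y (k + 2) - z (k + 2))))
      - ((γ - 1) * β) • (A *ᵥ (Aᴴ *ᵥ y (k + 1) - z (k + 1))) := by
  have hk₁ := h.add_smul_y_succ hμβ hβ (k + 1)
  have hk := h.add_smul_y_succ hμβ hβ k
  have hx := congrArg (A *ᵥ ·) (h.x_succ k)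
  simp only [mulVec_sub, mulVec_smul, mulVec_conjTranspose_mulVec hA] at hx ⊢
  linear_combination (norm := module) hk₁ - hk - hx

lemma estimate_of_projection (h : IsDualADM A b μ β γ x y z) (hA : A * Aᴴ = 1)
    (hp : IsKKTPoint A b μ xa ya za) (hμβ : μ + β ≠ 0) (hβ : 0 < β) (k : ℕ) :
    μ * l2sq (y (k + 1) - ya) + reInner (x k - xa) (Aᴴ *ᵥ y (k + 1) - z (k + 1))
      + β * l2sq (Aᴴ *ᵥ y (k + 1) - z (k + 1))
    ≤ β * (reInner (Aᴴ *ᵥ (y (k + 1) - y k)) (Aᴴ *ᵥ y (k + 1) - z (k + 1))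
      - reInner (y (k + 1) - y k) (y (k + 1) - ya)) := by
  set D := Aᴴ *ᵥ y (k + 1) - z (k + 1)
  set Q := y (k + 1) - ya
  set Δ := y (k + 1) - y k
  set R := z (k + 1) - za
  have hQ : Aᴴ *ᵥ Q = D + R := by
    simp only [Q, D, R, mulVec_sub, hp.z_eq]; abel
  have hμQ : μ * l2sq Q = -(reInner (x k - xa) (D + R) + β * reInner D (D + R)) := by
    rw [l2sq_eq_reInner, ← reInner_smul_left, h.smul_y_succ_sub hA hp hμβ hβ.ne' k,
      reInner_neg_left, reInner_mulVec_left, hQ, reInner_add_left, reInner_smul_left]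
  have hproj := h.reInner_sub_z_succ_le hβ k hp.norm_z_le
  rw [show x k + β • (Aᴴ *ᵥ y k - z (k + 1)) = (x k - xa) + β • D + xa - β • (Aᴴ *ᵥ Δ) by
      simp only [D, Δ, mulVec_sub]; module,
    show za - z (k + 1) = -R from (neg_sub _ _).symm, reInner_neg_right, reInner_sub_left,
    reInner_add_left, reInner_add_left, reInner_smul_left, reInner_smul_left] at hproj
  have hnormal := hp.reInner_sub_le _ (h.norm_z_succ_le k)
  have hΔR : reInner (Aᴴ *ᵥ Δ) R = reInner Δ Q - reInner (Aᴴ *ᵥ Δ) D := by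
    rw [show R = Aᴴ *ᵥ Q - D by rw [hQ]; abel, reInner_sub_right,
      reInner_conjTranspose_mulVec hA]
  rw [reInner_add_right, reInner_add_right, ← l2sq_eq_reInner] at hμQ
  nlinarith

lemma two_mul_reInner_residual_le (h : IsDualADM A b μ β γ x y z) (hA : A * Aᴴ = 1) (hμ : 0 ≤ μ)
    (hμβ : μ + β ≠ 0) (hβ : 0 < β) (k : ℕ) :
    2 * reInner (Aᴴ *ᵥ (y (k + 2) - y (k + 1))) (Aᴴ *ᵥ y (k + 2) - z (k + 2))
      ≤ l2sq (y (k + 2) - y (k + 1)) + (γ - 1) ^ 2 * l2sq (Aᴴ *ᵥ y (k + 1) - z (k + 1)) := by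
  set Δ := y (k + 2) - y (k + 1)
  set D := Aᴴ *ᵥ y (k + 2) - z (k + 2)
  set D₀ := Aᴴ *ᵥ y (k + 1) - z (k + 1)
  have hΔ : μ * l2sq Δ = -(β * reInner (Aᴴ *ᵥ Δ) D) - (γ - 1) * β * reInner (Aᴴ *ᵥ Δ) D₀ := by
    rw [l2sq_eq_reInner, ← reInner_smul_left, h.smul_y_succ_succ_sub hA hμβ hβ.ne' k,
      reInner_sub_left, reInner_neg_left, reInner_smul_left, reInner_smul_left,
      reInner_mulVec_left, reInner_mulVec_left, reInner_comm D, reInner_comm D₀]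
  have hsq := l2sq_nonneg (Aᴴ *ᵥ Δ + (γ - 1) • D₀)
  rw [l2sq_add, l2sq_conjTranspose_mulVec hA, reInner_smul_right, l2sq_smul] at hsq
  have hc : reInner (Aᴴ *ᵥ Δ) D ≤ -((γ - 1) * reInner (Aᴴ *ᵥ Δ) D₀) := by
    refine le_of_mul_le_mul_left ?_ hβ
    nlinarith [mul_nonneg hμ (l2sq_nonneg Δ)]
  linarith

lemma dualADMLyapunov_add_le (h : IsDualADM A b μ β γ x y z) (hA : A * Aᴴ = 1)
    (hp : IsKKTPoint A b μ xa ya za) (hμ : 0 < μ) (hβ : 0 < β) (hγ : 0 < γ) (k : ℕ) :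
    dualADMLyapunov A β γ x y z xa ya (k + 2) + 2 * γ * β * μ * l2sq (y (k + 2) - ya)
      + γ * β ^ 2 * (1 + γ - γ ^ 2) * l2sq (Aᴴ *ᵥ y (k + 2) - z (k + 2))
    ≤ dualADMLyapunov A β γ x y z xa ya (k + 1) := by
  have hμβ : μ + β ≠ 0 := by positivity
  have hproj := h.estimate_of_projection hA hp hμβ hβ (k + 1)
  have hdual := h.two_mul_reInner_residual_le hA hμ.le hμβ hβ k
  have hx : l2sq (x (k + 2) - xa) = l2sq (x (k + 1) - xa)
      + 2 * (γ * β) * reInner (x (k + 1) - xa) (Aᴴ *ᵥ y (k + 2) - z (k + 2))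
      + (γ * β) ^ 2 * l2sq (Aᴴ *ᵥ y (k + 2) - z (k + 2)) := by
    rw [show x (k + 2) - xa = (x (k + 1) - xa) + (γ * β) • (Aᴴ *ᵥ y (k + 2) - z (k + 2)) by
      rw [h.x_succ (k + 1)]; module, l2sq_add, reInner_smul_right, l2sq_smul]
    ring
  have hy : l2sq (y (k + 1) - ya) = l2sq (y (k + 2) - ya)
      - 2 * reInner (y (k + 2) - y (k + 1)) (y (k + 2) - ya) + l2sq (y (k + 2) - y (k + 1)) := by
    rw [← reInner_comm, ← l2sq_sub, sub_sub_sub_cancel_left]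
  unfold dualADMLyapunov
  rw [hx, hy]
  have hγβ : 0 ≤ γ * β := by positivity
  have hγβ2 : 0 ≤ γ * β ^ 2 := by positivity
  nlinarith [mul_le_mul_of_nonneg_left hproj hγβ, mul_le_mul_of_nonneg_left hdual hγβ2]

lemma antitone_dualADMLyapunov (h : IsDualADM A b μ β γ x y z) (hA : A * Aᴴ = 1)
    (hp : IsKKTPoint A b μ xa ya za) (hμ : 0 < μ) (hβ : 0 < β) (hγ : 0 < γ)
    (hγ₂ : γ ^ 2 < γ + 1) :
    Antitone fun k => dualADMLyapunov A β γ x y z xa ya (k + 1) := by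
  refine antitone_nat_of_succ_le fun k => ?_
  have := h.dualADMLyapunov_add_le hA hp hμ hβ hγ k
  have := mul_nonneg (by positivity : 0 ≤ 2 * γ * β * μ) (l2sq_nonneg (y (k + 2) - ya))
  have := mul_nonneg (mul_nonneg (by positivity : 0 ≤ γ * β ^ 2) (by linarith : 0 ≤ 1 + γ - γ ^ 2))
    (l2sq_nonneg (Aᴴ *ᵥ y (k + 2) - z (k + 2)))
  linarith

lemma tendsto_y_z (h : IsDualADM A b μ β γ x y z) (hA : A * Aᴴ = 1)
    (hp : IsKKTPoint A b μ xa ya za) (hμ : 0 < μ) (hβ : 0 < β) (hγ : 0 < γ)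
    (hγ₂ : γ ^ 2 < γ + 1) :
    Tendsto y atTop (𝓝 ya) ∧ Tendsto z atTop (𝓝 za) := by
  have hV (k : ℕ) : 0 ≤ dualADMLyapunov A β γ x y z xa ya (k + 1) :=
    dualADMLyapunov_nonneg hγ.le _
  have hdesc := h.dualADMLyapunov_add_le hA hp hμ hβ hγ
  have hcy : 0 < 2 * γ * β * μ := by positivity
  have hcr : 0 < γ * β ^ 2 * (1 + γ - γ ^ 2) := mul_pos (by positivity) (by linarith)
  have hy2 : Tendsto (fun k => l2sq (y (k + 2) - ya)) atTop (𝓝 0) :=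
    tendsto_zero_of_succ_add_mul_le hcy hV (fun _ => l2sq_nonneg _) fun k => by
      nlinarith [hdesc k, l2sq_nonneg (Aᴴ *ᵥ y (k + 2) - z (k + 2))]
  have hr2 : Tendsto (fun k => l2sq (Aᴴ *ᵥ y (k + 2) - z (k + 2))) atTop (𝓝 0) :=
    tendsto_zero_of_succ_add_mul_le hcr hV (fun _ => l2sq_nonneg _) fun k => by
      nlinarith [hdesc k, l2sq_nonneg (y (k + 2) - ya)]
  have hy : Tendsto y atTop (𝓝 ya) :=
    (tendsto_add_atTop_iff_nat 2).1 (tendsto_of_tendsto_l2sq_sub hy2)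
  have hr : Tendsto (fun k => Aᴴ *ᵥ y k - z k) atTop (𝓝 0) :=
    (tendsto_add_atTop_iff_nat 2).1 (tendsto_of_tendsto_l2sq_sub (by simpa only [sub_zero]))
  have hAy : Tendsto (fun k => Aᴴ *ᵥ y k) atTop (𝓝 (Aᴴ *ᵥ ya)) :=
    ((show Continuous (Aᴴ *ᵥ · : (m → ℂ) → n → ℂ) by fun_prop).tendsto ya).comp hy
  refine ⟨hy, ?_⟩
  simpa [← hp.z_eq] using hAy.sub hr

lemma exists_tendsto_subseq (h : IsDualADM A b μ β γ x y z) (hA : A * Aᴴ = 1)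
    (hp : IsKKTPoint A b μ xa ya za) (hμ : 0 < μ) (hβ : 0 < β) (hγ : 0 < γ)
    (hγ₂ : γ ^ 2 < γ + 1) :
    ∃ (xt : n → ℂ) (φ : ℕ → ℕ),
      Tendsto φ atTop atTop ∧ Tendsto (fun j => x (φ j + 1)) atTop (𝓝 xt) := by
  have hbdd (k : ℕ) : x (k + 1) ∈ Metric.closedBall xa √(dualADMLyapunov A β γ x y z xa ya 1) := by
    rw [Metric.mem_closedBall, dist_eq_norm]
    refine (norm_le_sqrt_l2sq _).trans (Real.sqrt_le_sqrt ?_)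
    exact (l2sq_sub_le_dualADMLyapunov hγ.le _).trans
      (h.antitone_dualADMLyapunov hA hp hμ hβ hγ hγ₂ (Nat.zero_le k))
  obtain ⟨xt, -, φ, hφ, hxφ⟩ := tendsto_subseq_of_bounded Metric.isBounded_closedBall hbdd
  exact ⟨xt, φ, hφ.tendsto_atTop, hxφ⟩

lemma isKKTPoint_of_tendsto (h : IsDualADM A b μ β γ x y z) (hA : A * Aᴴ = 1)
    (hp : IsKKTPoint A b μ xa ya za) (hμβ : μ + β ≠ 0) (hβ : 0 < β)
    (hy : Tendsto y atTop (𝓝 ya)) (hz : Tendsto z atTop (𝓝 za)) {φ : ℕ → ℕ} {xt : n → ℂ}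
    (hφ : Tendsto φ atTop atTop) (hx : Tendsto (fun j => x (φ j)) atTop (𝓝 xt)) :
    IsKKTPoint A b μ xt ya za where
  z_eq := hp.z_eq
  norm_z_le := hp.norm_z_le
  smul_y_eq := by
    have hφ₁ : Tendsto (φ · + 1) atTop atTop := (tendsto_add_atTop_nat 1).comp hφ
    have hcont : Continuous fun p : (n → ℂ) × (n → ℂ) => b - A *ᵥ p.1 + β • (A *ᵥ p.2) := by
      fun_prop
    have hlim : Tendsto (fun j => (μ + β) • y (φ j + 1)) atTop
        (𝓝 (b - A *ᵥ xt + β • (A *ᵥ za))) :=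
      ((hcont.tendsto (xt, za)).comp (hx.prodMk_nhds (hz.comp hφ₁))).congr fun j =>
        (h.add_smul_y_succ hμβ hβ.ne' (φ j)).symm
    have heq := tendsto_nhds_unique ((hy.comp hφ₁).const_smul (μ + β)) hlim
    rw [hp.z_eq, mulVec_conjTranspose_mulVec hA] at heq
    linear_combination (norm := module) heq
  reInner_sub_le v hv := by
    have hφ₁ : Tendsto (φ · + 1) atTop atTop := (tendsto_add_atTop_nat 1).comp hφ
    have hcont : Continuous fun p : (n → ℂ) × (m → ℂ) × (n → ℂ) =>
        reInner (p.1 + β • (Aᴴ *ᵥ p.2.1 - p.2.2)) (v - p.2.2) := by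
      fun_prop
    have hlim := (hcont.tendsto (xt, ya, za)).comp
      (hx.prodMk_nhds ((hy.comp hφ).prodMk_nhds (hz.comp hφ₁)))
    have hle := le_of_tendsto hlim <|
      Eventually.of_forall fun j => h.reInner_sub_z_succ_le hβ (φ j) hv
    dsimp only at hle
    rwa [← hp.z_eq, sub_self, smul_zero, add_zero] at hle

lemma tendsto_x (h : IsDualADM A b μ β γ x y z) (hA : A * Aᴴ = 1)
    (hp : IsKKTPoint A b μ xa ya za) (hμ : 0 < μ) (hβ : 0 < β) (hγ : 0 < γ)
    (hγ₂ : γ ^ 2 < γ + 1) (hy : Tendsto y atTop (𝓝 ya)) (hz : Tendsto z atTop (𝓝 za))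
    {φ : ℕ → ℕ} (hφ : Tendsto φ atTop atTop) (hx : Tendsto (fun j => x (φ j + 1)) atTop (𝓝 xa)) :
    Tendsto x atTop (𝓝 xa) := by
  have hφ₁ : Tendsto (φ · + 1) atTop atTop := (tendsto_add_atTop_nat 1).comp hφ
  have hV : Tendsto (fun k => dualADMLyapunov A β γ x y z xa ya (k + 1)) atTop (𝓝 0) := by
    rw [tendsto_iff_tendsto_subseq_of_antitone
      (h.antitone_dualADMLyapunov hA hp hμ hβ hγ hγ₂) hφ]
    exact tendsto_dualADMLyapunov (A := A) hx (hy.comp hφ₁) (hp.z_eq ▸ hz.comp hφ₁)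
  refine (tendsto_add_atTop_iff_nat 1).1 (tendsto_of_tendsto_l2sq_sub ?_)
  exact squeeze_zero (fun _ => l2sq_nonneg _) (fun k => l2sq_sub_le_dualADMLyapunov hγ.le _) hV

end IsDualADM

end DualADM

/-- Remark 2 (convergence of the dual ADM (2.28) when AA* = I): the iterates converge
to a primal-dual solution of QP_mu and its dual (2.26). -/
theorem dadm_qp_convergence {m n : ℕ} (A : Matrix (Fin m) (Fin n) ℂ)
    (hA : A * Aᴴ = 1) (b : Fin m → ℂ) (μ β γ : ℝ)
    (hμ : 0 < μ) (hβ : 0 < β) (hγ : 0 < γ) (hγ' : γ < (1 + Real.sqrt 5) / 2)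
    (x : ℕ → Fin n → ℂ) (y : ℕ → Fin m → ℂ) (z : ℕ → Fin n → ℂ)
    (hz : ∀ k, z (k+1) = projBox (Aᴴ.mulVec (y k) + (1/β) • x k))
    (hy : ∀ k, y (k+1) = (β/(μ+β)) • (A.mulVec (z (k+1)) - (1/β) • (A.mulVec (x k) - b)))
    (hx : ∀ k, x (k+1) = x k - (γ * β) • (z (k+1) - Aᴴ.mulVec (y (k+1)))) :
    ∃ (xt : Fin n → ℂ) (yt : Fin m → ℂ) (zt : Fin n → ℂ),
      Tendsto x atTop (𝓝 xt) ∧ Tendsto y atTop (𝓝 yt) ∧ Tendsto z atTop (𝓝 zt) ∧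
      (∀ x' : Fin n → ℂ,
        l1 xt + (1/(2*μ)) * l2sq (A.mulVec xt - b) ≤
          l1 x' + (1/(2*μ)) * l2sq (A.mulVec x' - b)) ∧
      zt = Aᴴ.mulVec yt ∧ linf zt ≤ 1 ∧
      (∀ (y' : Fin m → ℂ) (z' : Fin n → ℂ), z' = Aᴴ.mulVec y' → linf z' ≤ 1 →
        reInner b y' - (μ/2) * l2sq y' ≤ reInner b yt - (μ/2) * l2sq yt) := by
  have h : IsDualADM A b μ β γ x y z := ⟨hz, hy, hx⟩
  have hγ₂ := sq_lt_add_one_of_lt_goldenRatio hγ hγ'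
  obtain ⟨_, ya, za, hp⟩ := exists_isKKTPoint (A := A) (b := b) hμ
  obtain ⟨hyt, hzt⟩ := h.tendsto_y_z hA hp hμ hβ hγ hγ₂
  obtain ⟨xt, φ, hφ, hxφ⟩ := h.exists_tendsto_subseq hA hp hμ hβ hγ hγ₂
  have hq := h.isKKTPoint_of_tendsto hA hp (by positivity) hβ hyt hzt
    ((tendsto_add_atTop_nat 1).comp hφ) hxφ
  refine ⟨xt, ya, za, h.tendsto_x hA hq hμ hβ hγ hγ₂ hyt hzt hφ hxφ, hyt, hzt,
    hq.primalObjective_le hμ, hq.z_eq, (linf_le_one_iff za).2 hq.norm_z_le,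
    fun y' z' hz' hbox => hq.dualObjective_le hμ.le hz' ((linf_le_one_iff z').1 hbox)⟩
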